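/- arXiv:1902.00714 — 3 statements merged into one kernel-verified Lean document; each statement's English description precedes it below -/
import Mathlib

section
/- In the setting where each coordinate of $v \in \{0,1\}^N$ independently equals $u_k$ with probability $p \ne 1/2$, for fixed $u, w \in \{0,1\}^N$: if $p > 1/2$ then $\Pr(\Gamma_{v\oplus u} < \Gamma_{v\oplus w}) \ge \max\{0,\, 1 - 2\exp(-\tfrac{(1-2p)^2\Gamma_{u\oplus w}}{8})\}$, where $\Gamma_{x\oplus y}$ denotes Hamming distance. -/
/-!
On the coordinates where `u` and `w` differ, a binary `v` is closer to `u` than to `w` exactly when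
it agrees with `u` on more than half of them. The agreement indicators on those `Γ_{u⊕w}`
coordinates are independent, `[0, 1]`-valued and of mean `p`, so Hoeffding's inequality bounds the
probability that at most half of them agree by `exp (-(2p - 1)² Γ_{u⊕w} / 2)`, which is stronger
than the claimed bound.
-/

open MeasureTheory ProbabilityTheory Real

section

open Finset

theorem hammingDist_add_hammingDist_eq {ι : Type*} [Fintype ι] (u v w : ι → Bool) :
    hammingDist v w + hammingDist u w = hammingDist v u + 2 * #{k | u k ≠ w k ∧ v k = u k} := by
  simp only [hammingDist, card_filter, mul_sum, ← sum_add_distrib]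
  refine sum_congr rfl fun k _ ↦ ?_
  cases u k <;> cases v k <;> cases w k <;> rfl

theorem hammingDist_lt_hammingDist_iff {ι : Type*} [Fintype ι] (u v w : ι → Bool) :
    hammingDist v u < hammingDist v w ↔ hammingDist u w < 2 * #{k | u k ≠ w k ∧ v k = u k} := by
  have := hammingDist_add_hammingDist_eq u v w
  omega

variable {Ω ι : Type*} [MeasurableSpace Ω] {μ : Measure Ω} [IsProbabilityMeasure μ]

theorem measureReal_sum_le_sum_integral_sub_le_exp {X : ι → Ω → ℝ} (hindep : iIndepFun X μ)
    (hmeas : ∀ i, AEMeasurable (X i) μ) (hbound : ∀ i, ∀ᵐ ω ∂μ, X i ω ∈ Set.Icc 0 1)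
    (s : Finset ι) {t : ℝ} (ht : 0 ≤ t) :
    μ.real {ω | ∑ i ∈ s, X i ω ≤ ∑ i ∈ s, μ[X i] - #s * t} ≤ exp (-2 * #s * t ^ 2) := by
  have hsubG : ∀ i ∈ s, HasSubgaussianMGF (fun ω ↦ μ[X i] - X i ω) ((‖(1 : ℝ) - 0‖₊ / 2) ^ 2) μ :=
    fun i _ ↦ (hasSubgaussianMGF_of_mem_Icc (hmeas i) (hbound i)).neg.congr
      (ae_of_all _ fun ω ↦ neg_sub _ _)
  have hoeffding := HasSubgaussianMGF.measure_sum_ge_le_of_iIndepFun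
    (hindep.comp (fun i y ↦ μ[X i] - y) fun i ↦ by fun_prop) hsubG
    (mul_nonneg (Nat.cast_nonneg #s) ht)
  convert hoeffding using 2
  · ext ω
    simp only [Set.mem_ofPred_eq, Function.comp_apply, sum_sub_distrib]
    exact le_sub_comm
  · rcases eq_or_ne #s 0 with hs | hs
    · simp [hs]
    · simp [field]

theorem measureReal_two_mul_card_agree_le_card_le_exp {β : Type*} [MeasurableSpace β]
    [MeasurableSingletonClass β] [DecidableEq β] {V : Ω → ι → β}
    (hmeas : ∀ k, Measurable fun ω ↦ V ω k) (hindep : iIndepFun (fun k ω ↦ V ω k) μ)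
    (u : ι → β) {p : ℝ} (hp : 1 / 2 ≤ p) (hmatch : ∀ k, μ.real {ω | V ω k = u k} = p)
    (s : Finset ι) :
    μ.real {ω | 2 * #{k ∈ s | V ω k = u k} ≤ #s} ≤ exp (-2 * #s * (p - 1 / 2) ^ 2) := by
  set X : ι → Ω → ℝ := fun k ↦ {ω | V ω k = u k}.indicator 1
  have hmatchSet : ∀ k, MeasurableSet {ω | V ω k = u k} :=
    fun k ↦ hmeas k (measurableSet_singleton (u k))
  have hXindep : iIndepFun X μ :=
    hindep.comp (fun k ↦ ({u k} : Set β).indicator 1) fun k ↦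
      measurable_one.indicator (measurableSet_singleton _)
  have htail := measureReal_sum_le_sum_integral_sub_le_exp hXindep
    (fun k ↦ (measurable_one.indicator (hmatchSet k)).aemeasurable)
    (fun k ↦ ae_of_all _ fun ω ↦ ⟨Set.indicator_nonneg (fun _ _ ↦ zero_le_one) ω,
      Set.indicator_le_self' (fun _ _ ↦ zero_le_one) ω⟩) s (sub_nonneg.2 hp)
  have hmean : ∀ k, μ[X k] = p := fun k ↦ (integral_indicator_one (hmatchSet k)).trans (hmatch k)
  have hsum : ∀ ω, ∑ k ∈ s, X k ω = #{k ∈ s | V ω k = u k} := fun ω ↦ by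
    simp only [X, Set.indicator_apply, Set.mem_ofPred_eq, Pi.one_apply, sum_boole]
  refine (measureReal_mono fun ω hω ↦ ?_).trans htail
  have hω' : (2 * #{k ∈ s | V ω k = u k} : ℝ) ≤ #s := by exact_mod_cast hω
  simp only [Set.mem_ofPred_eq, hsum, hmean, sum_const, nsmul_eq_mul]
  linarith

end

theorem stmt6_general {Ω : Type*} [MeasurableSpace Ω] (μP : Measure Ω) [IsProbabilityMeasure μP]
    (N : ℕ) (u w : Fin N → Bool) (p : ℝ) (hp : 1 / 2 < p)
    (V : Ω → Fin N → Bool)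
    (hmeas : ∀ k, Measurable (fun ω => V ω k))
    (hindep : iIndepFun (fun k ω => V ω k) μP)
    (hmatch : ∀ k, (μP {ω | V ω k = u k}).toReal = p) :
    max 0 (1 - 2 * Real.exp (-((1 - 2 * p) ^ 2 * (hammingDist u w : ℝ)) / 8))
      ≤ (μP {ω | hammingDist (V ω) u < hammingDist (V ω) w}).toReal := by
  set D : Finset (Fin N) := {k | u k ≠ w k}
  set bad := {ω | 2 * Finset.card {k ∈ D | V ω k = u k} ≤ D.card}
  set good := {ω | hammingDist (V ω) u < hammingDist (V ω) w}
  have hbad : μP.real bad ≤ exp (-2 * D.card * (p - 1 / 2) ^ 2) :=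
    measureReal_two_mul_card_agree_le_card_le_exp hmeas hindep u hp.le hmatch D
  have hcover : bad ∪ good = Set.univ := by
    refine Set.eq_univ_of_forall fun ω ↦ or_iff_not_imp_left.2 fun hω ↦ ?_
    rw [Set.mem_ofPred_eq, hammingDist_lt_hammingDist_iff, ← Finset.filter_filter]
    exact not_le.1 hω
  have hunion : 1 ≤ μP.real bad + μP.real good := by
    simpa [hcover] using measureReal_union_le (μ := μP) bad good
  have hexp : exp (-2 * D.card * (p - 1 / 2) ^ 2) ≤
      exp (-((1 - 2 * p) ^ 2 * (hammingDist u w : ℝ)) / 8) := by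
    change exp (-2 * (hammingDist u w : ℝ) * _) ≤ _
    gcongr
    nlinarith [sq_nonneg (1 - 2 * p), Nat.cast_nonneg (α := ℝ) (hammingDist u w)]
  refine max_le ENNReal.toReal_nonneg ?_
  have := exp_nonneg (-((1 - 2 * p) ^ 2 * (hammingDist u w : ℝ)) / 8)
  change _ ≤ μP.real good
  linarith

/-- Corollary 1 of the paper: with coordinates of `V` independently matching `u` with
probability `p > 1/2`, the probability that `V` is strictly closer to `u` than to `w`
in Hamming distance is at least `max{0, 1 - 2 exp(-(1-2p)² Γ_{u⊕w} / 8)}`. -/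
theorem stmt6 {Ω : Type*} [MeasurableSpace Ω] (μP : Measure Ω) [IsProbabilityMeasure μP]
    (N : ℕ) (u w : Fin N → Bool) (p : ℝ) (hp : 1 / 2 < p) (hp1 : p ≤ 1)
    (V : Ω → Fin N → Bool)
    (hmeas : ∀ k, Measurable (fun ω => V ω k))
    (hindep : iIndepFun (fun k ω => V ω k) μP)
    (hmatch : ∀ k, (μP {ω | V ω k = u k}).toReal = p) :
    max 0 (1 - 2 * Real.exp (-((1 - 2 * p) ^ 2 * (hammingDist u w : ℝ)) / 8))
      ≤ (μP {ω | hammingDist (V ω) u < hammingDist (V ω) w}).toReal :=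
  stmt6_general μP N u w p hp V hmeas hindep hmatch
end

section
/- Let $p > 1/2$, let $u, w_1, \dots, w_M \in \{0,1\}^N$ be fixed, and let $v \in \{0,1\}^N$ be random with independent coordinates, each equal to $u_k$ with probability $p$. If $\min_j \Gamma_{u\oplus w_j} \ge \frac{16\ln N + 8\ln(2M)}{(1-2p)^2}$, then $\Pr\left(\exists j,\ \Gamma_{v\oplus u} \ge \Gamma_{v\oplus w_j}\right) \le \frac{1}{N^2}$. -/
open MeasureTheory ProbabilityTheory Real Finset

/-! On the coordinates where `u` and `w` differ, `v` is at least as close to `w` as to `u` exactly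
when at most half of them agree with `u`. They agree independently with probability `p > 1/2`, so
Hoeffding's inequality bounds this event by `exp (-Γ(u ⊕ w) (1 - 2p)² / 2)`, which the distance
assumption makes at most `1 / (2 M N²)`; a union bound over the `M` competitors finishes. -/

theorem hammingDist_add_two_mul_card_filter {N : ℕ} (u v w : Fin N → Bool) :
    hammingDist v w + 2 * #{k | u k ≠ w k ∧ v k ≠ u k} = hammingDist v u + hammingDist u w := by
  simp only [hammingDist, card_filter, mul_sum, ← sum_add_distrib]
  refine sum_congr rfl fun k _ => ?_
  cases u k <;> cases v k <;> cases w k <;> rfl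

theorem natCast_mul_exp_neg_log_le {N : ℕ} (hN : 0 < N) (M : ℕ) :
    M * exp (-(16 * log N + 8 * log (2 * M)) / 2) ≤ 1 / (N : ℝ) ^ 2 := by
  rcases M.eq_zero_or_pos with rfl | hM
  · simp
  have hlogN : 0 ≤ log N := log_natCast_nonneg N
  have hlogM : 0 ≤ log (2 * M) := by exact_mod_cast log_natCast_nonneg (2 * M)
  have hN2 : (0 : ℝ) < N ^ 2 := by positivity
  calc M * exp (-(16 * log N + 8 * log (2 * M)) / 2)
      ≤ M * exp (-(log (N ^ 2) + log (2 * M))) := by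
        rw [log_pow]; gcongr; push_cast; linarith
    _ = 1 / (2 * N ^ 2) := by
      rw [exp_neg, exp_add, exp_log hN2, exp_log (by positivity)]
      field_simp
    _ ≤ 1 / (N : ℝ) ^ 2 := by gcongr; linarith

section Probability

variable {Ω : Type*} [MeasurableSpace Ω] {μ : Measure Ω} [IsProbabilityMeasure μ]

theorem measureReal_le_sum_indicator_le {ι : Type*} {A : ι → Set Ω}
    (hA : ∀ i, MeasurableSet (A i))
    (hindep : iIndepFun (fun i => (A i).indicator (1 : Ω → ℝ)) μ) {q : ℝ}
    (hq : ∀ i, μ.real (A i) = q) (s : Finset ι) {δ : ℝ} (hδ : 0 ≤ δ) :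
    μ.real {ω | #s * (q + δ) ≤ ∑ i ∈ s, (A i).indicator 1 ω} ≤ exp (-2 * #s * δ ^ 2) := by
  rcases s.eq_empty_or_nonempty with rfl | hs
  · simp
  set X := fun i => (A i).indicator (1 : Ω → ℝ)
  have hmean : ∀ i, μ[X i] = q := fun i => (integral_indicator_one (hA i)).trans (hq i)
  have hsubG : ∀ i ∈ s,
      HasSubgaussianMGF (fun ω => X i ω - μ[X i]) ((‖(1 : ℝ) - 0‖₊ / 2) ^ 2) μ :=
    fun i _ => hasSubgaussianMGF_of_mem_Icc (measurable_one.indicator (hA i)).aemeasurable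
      (ae_of_all _ fun ω => ⟨Set.indicator_nonneg (fun _ _ => zero_le_one) ω,
        Set.indicator_le_self' (fun _ _ => zero_le_one) ω⟩)
  have hoeffding := HasSubgaussianMGF.measure_sum_ge_le_of_iIndepFun
    (hindep.comp (fun i x => x - μ[X i]) fun i => by fun_prop) hsubG
    (mul_nonneg (#s).cast_nonneg hδ)
  simp only [hmean, Function.comp_apply, sum_sub_distrib, sum_const, nsmul_eq_mul,
    le_sub_iff_add_le] at hoeffding
  have hcard : (#s : ℝ) ≠ 0 := by positivity
  convert hoeffding using 3
  · ext ω; simp only [X]; ring_nf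
  · push_cast; field_simp; norm_num

theorem measureReal_hammingDist_le_hammingDist_le {N : ℕ} {V : Ω → Fin N → Bool}
    (hmeas : ∀ k, Measurable fun ω => V ω k) (hindep : iIndepFun (fun k ω => V ω k) μ)
    {u : Fin N → Bool} {p : ℝ} (hp : 1 / 2 < p) (hmatch : ∀ k, μ.real {ω | V ω k = u k} = p)
    (w : Fin N → Bool) :
    μ.real {ω | hammingDist (V ω) w ≤ hammingDist (V ω) u}
      ≤ exp (-(hammingDist u w * (1 - 2 * p) ^ 2) / 2) := by
  set A : Fin N → Set Ω := fun k => {ω | V ω k = u k}ᶜ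
  have hmatchMeas : ∀ k, MeasurableSet {ω | V ω k = u k} :=
    fun k => hmeas k (measurableSet_singleton _)
  have hA : ∀ k, MeasurableSet (A k) := fun k => (hmatchMeas k).compl
  have hindepA : iIndepFun (fun k => (A k).indicator (1 : Ω → ℝ)) μ := by
    convert hindep.comp (fun k b => if b = u k then (0 : ℝ) else 1) fun _ => measurable_from_top
      using 1
    ext k ω
    by_cases h : V ω k = u k <;> simp [A, h]
  have hq : ∀ k, μ.real (A k) = 1 - p := fun k => by
    rw [probReal_compl_eq_one_sub (hmatchMeas k), hmatch]
  have hoeffding := measureReal_le_sum_indicator_le hA hindepA hq {k | u k ≠ w k}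
    (by linarith : 0 ≤ p - 1 / 2)
  refine (measureReal_mono (fun ω hω => ?_)).trans (hoeffding.trans_eq ?_)
  · have hsplit := hammingDist_add_two_mul_card_filter u (V ω) w
    simp only [Set.mem_ofPred_eq, Set.indicator_apply, A, Set.mem_compl_iff, Pi.one_apply,
      sum_boole, filter_filter] at hω ⊢
    have hcount : (hammingDist u w : ℝ) ≤ 2 * #{k | u k ≠ w k ∧ V ω k ≠ u k} := by
      exact_mod_cast (by omega : hammingDist u w ≤ 2 * #{k | u k ≠ w k ∧ V ω k ≠ u k})
    change (hammingDist u w : ℝ) * _ ≤ #{k | u k ≠ w k ∧ V ω k ≠ u k}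
    linarith
  · rw [show hammingDist u w = #{k | u k ≠ w k} from rfl]
    ring_nf

end Probability

theorem stmt7_general {Ω : Type*} [MeasurableSpace Ω] (μP : Measure Ω) [IsProbabilityMeasure μP]
    (N M : ℕ) (u : Fin N → Bool) (w : Fin M → Fin N → Bool)
    (p : ℝ) (hp : 1 / 2 < p)
    (V : Ω → Fin N → Bool)
    (hmeas : ∀ k, Measurable (fun ω => V ω k))
    (hindep : iIndepFun (fun k ω => V ω k) μP)
    (hmatch : ∀ k, (μP {ω | V ω k = u k}).toReal = p)
    (hdist : ∀ j, (16 * Real.log N + 8 * Real.log (2 * M)) / (1 - 2 * p) ^ 2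
        ≤ (hammingDist u (w j) : ℝ)) :
    (μP {ω | ∃ j, hammingDist (V ω) (w j) ≤ hammingDist (V ω) u}).toReal
      ≤ 1 / (N : ℝ) ^ 2 := by
  rcases isEmpty_or_nonempty (Fin M) with _ | ⟨⟨j₀⟩⟩
  · simp
  have hgap : 0 < (1 - 2 * p) ^ 2 := by nlinarith
  have hN : N ≠ 0 := by
    rintro rfl
    have hlog : 0 < log (2 * M) := log_pos (by have := j₀.pos; norm_cast; omega)
    have h := hdist j₀
    rw [Subsingleton.elim (w j₀) u, hammingDist_self, Nat.cast_zero, log_zero] at h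
    exact (div_pos (by linarith) hgap).not_ge h
  have hterm : ∀ j, μP.real {ω | hammingDist (V ω) (w j) ≤ hammingDist (V ω) u}
      ≤ exp (-(16 * log N + 8 * log (2 * M)) / 2) := fun j => by
    refine (measureReal_hammingDist_le_hammingDist_le hmeas hindep hp hmatch (w j)).trans ?_
    have hj := (div_le_iff₀ hgap).mp (hdist j)
    gcongr
  calc μP.real {ω | ∃ j, hammingDist (V ω) (w j) ≤ hammingDist (V ω) u}
      ≤ ∑ j, μP.real {ω | hammingDist (V ω) (w j) ≤ hammingDist (V ω) u} := by
        rw [Set.ofPred_exists]; exact measureReal_iUnion_fintype_le _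
    _ ≤ ∑ _j : Fin M, exp (-(16 * log N + 8 * log (2 * M)) / 2) := sum_le_sum fun j _ => hterm j
    _ ≤ 1 / (N : ℝ) ^ 2 := by
        simpa using natCast_mul_exp_neg_log_le (Nat.pos_of_ne_zero hN) M

/-- Union-bound step of Lemma 2: if every competitor `w j` is at Hamming distance at
least `(16 ln N + 8 ln(2M))/(1-2p)²` from `u`, then the probability that some competitor
is at least as close to the random vector `V` as `u` is at most `1/N²`. -/
theorem stmt7 {Ω : Type*} [MeasurableSpace Ω] (μP : Measure Ω) [IsProbabilityMeasure μP]
    (N M : ℕ) (hM : 1 ≤ M) (u : Fin N → Bool) (w : Fin M → Fin N → Bool)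
    (p : ℝ) (hp : 1 / 2 < p) (hp1 : p ≤ 1)
    (V : Ω → Fin N → Bool)
    (hmeas : ∀ k, Measurable (fun ω => V ω k))
    (hindep : iIndepFun (fun k ω => V ω k) μP)
    (hmatch : ∀ k, (μP {ω | V ω k = u k}).toReal = p)
    (hdist : ∀ j, (16 * Real.log N + 8 * Real.log (2 * M)) / (1 - 2 * p) ^ 2
        ≤ (hammingDist u (w j) : ℝ)) :
    (μP {ω | ∃ j, hammingDist (V ω) (w j) ≤ hammingDist (V ω) u}).toReal
      ≤ 1 / (N : ℝ) ^ 2 :=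
  stmt7_general μP N M u w p hp V hmeas hindep hmatch hdist
end

section
/- Let $p \ne 1/2$, let $u, w_1,\dots,w_M \in \{0,1\}^N$, and let $v$ have independent coordinates matching $u$ with probability $p$. Then the probability that $u$ is among the $K$ points of $\{u, w_1,\dots,w_M\}$ (with $K = M' - M$ for total size $M'$) not dominated by any $w_j$ satisfies: $\Pr(\forall j,\ \Gamma_{v\oplus u} < \Gamma_{v\oplus w_j}\text{ if }p>1/2,\text{ resp. }>\text{ if }p<1/2) \ge \max\{0,\ 1 - 2M\exp(-\tfrac{(1-2p)^2\,\Gamma_{\min}}{8})\}$, where $\Gamma_{\min} = \min_j \Gamma_{u\oplus w_j}$. -/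
open MeasureTheory ProbabilityTheory Real Finset

/-!
Off the coordinates where `u` and `w` differ, `V` is equally far from both; on each of the
`d(u, w)` others it is closer to `u` exactly when it agrees with `u`. So `d(V, w) - d(V, u)` is a
sum of `d(u, w)` independent `±1` signs of mean `2p - 1`, and Hoeffding's inequality bounds the
probability that it has the wrong sign by `exp(-(1 - 2p)² d(u, w) / 2)`. A union bound over the
`M` competitors finishes the proof.
-/

def agreementSign {ι : Type*} (a b : ι → Bool) (k : ι) : ℝ := if a k = b k then 1 else -1

lemma hammingDist_sub_hammingDist {ι : Type*} [Fintype ι] (a u w : ι → Bool) :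
    (hammingDist a w : ℝ) - hammingDist a u = ∑ k with u k ≠ w k, agreementSign a u k := by
  simp only [hammingDist, card_filter, Nat.cast_sum, ← sum_sub_distrib, sum_filter, agreementSign]
  refine sum_congr rfl fun k _ => ?_
  cases a k <;> cases u k <;> cases w k <;> norm_num

lemma one_sub_sum_measureReal_compl_le_measureReal_iInter {Ω ι : Type*} [MeasurableSpace Ω]
    (μ : Measure Ω) [IsProbabilityMeasure μ] [Fintype ι] (A : ι → Set Ω) :
    1 - ∑ i, μ.real (A i)ᶜ ≤ μ.real (⋂ i, A i) := by
  have hcover : 1 ≤ μ.real (⋂ i, A i) + μ.real (⋃ i, (A i)ᶜ) := by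
    rw [← Set.compl_iInter, ← probReal_univ (μ := μ), ← Set.union_compl_self (⋂ i, A i)]
    exact measureReal_union_le _ _
  linarith [measureReal_iUnion_fintype_le (μ := μ) fun i => (A i)ᶜ]

lemma measureReal_sum_nonpos_le_of_mem_Icc {Ω ι : Type*} [MeasurableSpace Ω] {μ : Measure Ω}
    [IsProbabilityMeasure μ] {X : ι → Ω → ℝ} (hindep : iIndepFun X μ)
    (hmeas : ∀ i, Measurable (X i)) {a b m : ℝ} (hX : ∀ i ω, X i ω ∈ Set.Icc a b)
    (hmean : ∀ i, μ[X i] = m) (hm : 0 ≤ m) (s : Finset ι) :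
    μ.real {ω | ∑ i ∈ s, X i ω ≤ 0} ≤ exp (-2 * m ^ 2 * #s / (b - a) ^ 2) := by
  have hsubG : ∀ i, HasSubgaussianMGF (fun ω => m - X i ω) ((‖b - a‖₊ / 2) ^ 2) μ := fun i =>
    (hasSubgaussianMGF_of_mem_Icc (μ := μ) (hmeas i).aemeasurable (ae_of_all _ (hX i))).neg.congr
      (ae_of_all _ fun ω => by simp [hmean i])
  have hindep' : iIndepFun (fun i ω => m - X i ω) μ :=
    hindep.comp (fun _ x => m - x) fun _ => by fun_prop
  have hoeffding := HasSubgaussianMGF.measure_sum_ge_le_of_iIndepFun hindep' (s := s)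
    (fun i _ => hsubG i) (mul_nonneg hm (Nat.cast_nonneg #s))
  convert hoeffding using 2
  · ext ω
    simp [sum_sub_distrib, mul_comm]
  · push_cast [sum_const, nsmul_eq_mul, Real.norm_eq_abs, div_pow, sq_abs]
    rcases eq_or_ne (#s : ℝ) 0 with hs | hs
    · simp [hs]
    rcases eq_or_ne (b - a) 0 with hab | hab
    · simp [hab]
    field_simp

section SignedAgreement

variable {Ω ι : Type*} [MeasurableSpace Ω] {μ : Measure Ω} {V : Ω → ι → Bool} {u : ι → Bool}

lemma integral_agreementSign [IsProbabilityMeasure μ] {k : ι} (hV : Measurable fun ω => V ω k) :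
    μ[fun ω => agreementSign (V ω) u k] = 2 * μ.real {ω | V ω k = u k} - 1 := by
  have hE : MeasurableSet {ω | V ω k = u k} := hV (measurableSet_singleton _)
  have hpiece : (fun ω => agreementSign (V ω) u k) =
      {ω | V ω k = u k}.piecewise (fun _ => 1) (fun _ => -1) := by
    ext ω
    simp [agreementSign, Set.piecewise]
  rw [hpiece, integral_piecewise hE integrableOn_const integrableOn_const, setIntegral_const,
    setIntegral_const, measureReal_compl hE]
  simp only [smul_eq_mul, probReal_univ]
  ring

lemma measureReal_mul_sum_agreementSign_nonpos_le [IsProbabilityMeasure μ]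
    (hmeas : ∀ k, Measurable fun ω => V ω k) (hindep : iIndepFun (fun k ω => V ω k) μ)
    {p σ : ℝ} (hmatch : ∀ k, μ.real {ω | V ω k = u k} = p) (hσ : σ ^ 2 = 1)
    (hσp : 0 ≤ σ * (2 * p - 1)) (s : Finset ι) :
    μ.real {ω | σ * ∑ k ∈ s, agreementSign (V ω) u k ≤ 0} ≤ exp (-(1 - 2 * p) ^ 2 * #s / 2) := by
  have hindep' : iIndepFun (fun k ω => σ * agreementSign (V ω) u k) μ :=
    hindep.comp (fun k b => σ * if b = u k then 1 else -1) fun _ => measurable_from_top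
  have hbound : ∀ k ω, σ * agreementSign (V ω) u k ∈ Set.Icc (-1) 1 := by
    intro k ω
    obtain rfl | rfl := sq_eq_one_iff.mp hσ <;>
      unfold agreementSign <;> split_ifs <;> norm_num
  have hmean : ∀ k, μ[fun ω => σ * agreementSign (V ω) u k] = σ * (2 * p - 1) := by
    intro k
    rw [integral_const_mul, integral_agreementSign (hmeas k), hmatch]
  have hXmeas : ∀ k, Measurable fun ω => σ * agreementSign (V ω) u k := fun k =>
    (measurable_from_top (f := fun b => σ * if b = u k then 1 else -1)).comp (hmeas k)
  have hoeffding := measureReal_sum_nonpos_le_of_mem_Icc hindep' hXmeas hbound hmean hσp s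
  simp only [← mul_sum] at hoeffding
  refine hoeffding.trans_eq ?_
  congr 1
  linear_combination (-(2 * p - 1) ^ 2 * #s / 2) * hσ

end SignedAgreement

theorem stmt8_general {Ω : Type*} [MeasurableSpace Ω] (μP : Measure Ω) [IsProbabilityMeasure μP]
    (N M : ℕ) (u : Fin N → Bool) (w : Fin M → Fin N → Bool)
    (p : ℝ)
    (V : Ω → Fin N → Bool)
    (hmeas : ∀ k, Measurable (fun ω => V ω k))
    (hindep : iIndepFun (fun k ω => V ω k) μP)
    (hmatch : ∀ k, (μP {ω | V ω k = u k}).toReal = p)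
    (Γmin : ℕ) (hΓmin : IsLeast (Set.range fun j => hammingDist u (w j)) Γmin) :
    max 0 (1 - 2 * M * Real.exp (-((1 - 2 * p) ^ 2 * (Γmin : ℝ)) / 8))
      ≤ (μP {ω | ∀ j, if 1 / 2 < p
            then hammingDist (V ω) u < hammingDist (V ω) (w j)
            else hammingDist (V ω) (w j) < hammingDist (V ω) u}).toReal := by
  set σ : ℝ := if 1 / 2 < p then 1 else -1 with hσ_def
  have hσ : σ ^ 2 = 1 := by rw [hσ_def]; split_ifs <;> norm_num
  have hσp : 0 ≤ σ * (2 * p - 1) := by rw [hσ_def]; split_ifs <;> linarith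
  have hwin : ∀ ω j, (if 1 / 2 < p then hammingDist (V ω) u < hammingDist (V ω) (w j)
      else hammingDist (V ω) (w j) < hammingDist (V ω) u) ↔
      0 < σ * ∑ k with u k ≠ w j k, agreementSign (V ω) u k := by
    intro ω j
    rw [← hammingDist_sub_hammingDist, hσ_def]
    split_ifs <;> simp
  have hlose : ∀ j, μP.real {ω | 0 < σ * ∑ k with u k ≠ w j k, agreementSign (V ω) u k}ᶜ ≤
      exp (-((1 - 2 * p) ^ 2 * Γmin) / 8) := by
    intro j
    simp only [Set.compl_ofPred, not_lt]
    refine (measureReal_mul_sum_agreementSign_nonpos_le hmeas hindep hmatch hσ hσp _).trans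
      (exp_le_exp.2 ?_)
    have hΓ : (Γmin : ℝ) ≤ #{k | u k ≠ w j k} := by exact_mod_cast hΓmin.2 ⟨j, rfl⟩
    nlinarith [sq_nonneg (1 - 2 * p)]
  simp_rw [hwin, Set.ofPred_forall]
  refine max_le measureReal_nonneg
    (le_trans ?_ (one_sub_sum_measureReal_compl_le_measureReal_iInter μP _))
  have hsum := sum_le_sum fun j (_ : j ∈ univ) => hlose j
  rw [sum_const, card_univ, Fintype.card_fin, nsmul_eq_mul] at hsum
  nlinarith [exp_pos (-((1 - 2 * p) ^ 2 * Γmin) / 8)]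

/-- Corollary 2 of the paper (Top-K inferability probability bound): with `p ≠ 1/2`,
the probability that the true user `u` beats every one of the `M` competitors `w j`
(strictly smaller Hamming distance to `V` when `p > 1/2`, strictly larger when
`p < 1/2`) is at least `max{0, 1 - 2M exp(-(1-2p)² Γ_min / 8)}`, where `Γ_min` is the
minimum Hamming distance from `u` to the competitors. -/
theorem stmt8 {Ω : Type*} [MeasurableSpace Ω] (μP : Measure Ω) [IsProbabilityMeasure μP]
    (N M : ℕ) (hM : 1 ≤ M) (u : Fin N → Bool) (w : Fin M → Fin N → Bool)
    (p : ℝ) (hp : p ≠ 1 / 2) (hp0 : 0 ≤ p) (hp1 : p ≤ 1)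
    (V : Ω → Fin N → Bool)
    (hmeas : ∀ k, Measurable (fun ω => V ω k))
    (hindep : iIndepFun (fun k ω => V ω k) μP)
    (hmatch : ∀ k, (μP {ω | V ω k = u k}).toReal = p)
    (Γmin : ℕ) (hΓmin : IsLeast (Set.range fun j => hammingDist u (w j)) Γmin) :
    max 0 (1 - 2 * M * Real.exp (-((1 - 2 * p) ^ 2 * (Γmin : ℝ)) / 8))
      ≤ (μP {ω | ∀ j, if 1 / 2 < p
            then hammingDist (V ω) u < hammingDist (V ω) (w j)
            else hammingDist (V ω) (w j) < hammingDist (V ω) u}).toReal :=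
  stmt8_general μP N M u w p V hmeas hindep hmatch Γmin hΓmin
end
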